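/- arXiv:1405.7205 — 4 statements merged into one kernel-verified Lean document; each statement's English description precedes it below -/
import Mathlib

section
/- Let m ≥ 2 and let z₁ ≥ z₂ ≥ ⋯ > 0 be a nonincreasing sequence with zⱼ ≤ j^{-(m-1)/(2m)} for all j. Then for every j ≥ 1, the sum over all 1 ≤ i₁ ≤ i₂ ≤ ⋯ ≤ i_{m-1} ≤ j of z_{i₁}²⋯z_{i_{m-1}}² is at most e^{m-1} · j^{(m-1)/m}. -/
/-!
Squaring the hypothesis gives `z_i² ≤ i^{-(m-1)/m}`, so it suffices to bound the sum of
`∏ i_a^{-(m-1)/m}` over nondecreasing `k`-tuples with entries in `[1, v]`. Splitting off the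
largest entry `u` expresses the sum for `k + 1` through the sums for `k` with bound `u`, and
`∑_{u ≤ v} u^{c-1} ≤ v^c / c` for `0 < c ≤ 1` (Bernoulli's inequality, telescoped) yields by
induction on `k ≤ m` the bound `m^k / k! · v^{k/m}`. For `k = m - 1` the constant is at most
`e^{m-1}` because `(1 + 1/n)^n ≤ e`.
-/

open Finset Real
open scoped Nat

theorem mul_rpow_sub_one_le_rpow_sub_rpow {c x : ℝ} (hc₀ : 0 ≤ c) (hc₁ : c ≤ 1) (hx : 1 ≤ x) :
    c * x ^ (c - 1) ≤ x ^ c - (x - 1) ^ c := by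
  have hx₀ : 0 < x := by linarith
  have hbern : (1 + -x⁻¹) ^ c ≤ 1 + c * -x⁻¹ :=
    rpow_one_add_le_one_add_mul_self (by linarith [inv_le_one_of_one_le₀ hx]) hc₀ hc₁
  have hfactor : (x - 1) ^ c = x ^ c * (1 + -x⁻¹) ^ c := by
    rw [← mul_rpow hx₀.le (by linarith [inv_le_one_of_one_le₀ hx])]
    congr 1
    field_simp
    ring
  have hscale : x ^ c * (1 + c * -x⁻¹) = x ^ c - c * x ^ (c - 1) := by
    rw [rpow_sub_one hx₀.ne']
    ring
  nlinarith [rpow_nonneg hx₀.le c]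

theorem sum_Icc_rpow_sub_one_le {c : ℝ} (hc₀ : 0 < c) (hc₁ : c ≤ 1) (v : ℕ) :
    ∑ u ∈ Icc 1 v, (u : ℝ) ^ (c - 1) ≤ (v : ℝ) ^ c / c := by
  induction v with
  | zero => simp [zero_rpow hc₀.ne']
  | succ v ih =>
    rw [sum_Icc_succ_top (by omega), le_div_iff₀ hc₀, add_mul]
    have hstep := mul_rpow_sub_one_le_rpow_sub_rpow hc₀.le hc₁ (x := (v + 1 : ℕ)) (by simp)
    rw [le_div_iff₀ hc₀] at ih
    push_cast at hstep ⊢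
    rw [add_sub_cancel_right] at hstep
    linarith

theorem pow_le_exp_mul_factorial (n : ℕ) : ((n : ℝ) + 1) ^ n ≤ exp n * n ! := by
  induction n with
  | zero => simp
  | succ n ih =>
    push_cast
    calc ((n : ℝ) + 1 + 1) ^ (n + 1)
        = (1 + ((n + 1 : ℕ) : ℝ)⁻¹) ^ (n + 1) * ((n : ℝ) + 1) ^ (n + 1) := by
          rw [← mul_pow]
          push_cast
          field_simp
      _ ≤ exp 1 * ((n : ℝ) + 1) ^ (n + 1) := by gcongr; exact one_add_inv_pow_le_exp
      _ = exp 1 * ((n + 1) * ((n : ℝ) + 1) ^ n) := by ring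
      _ ≤ exp 1 * ((n + 1) * (exp n * n !)) := by gcongr
      _ = exp (n + 1) * (n + 1)! := by
        push_cast [Nat.factorial_succ, exp_add]
        ring

def monotoneTuples (k v : ℕ) : Finset (Fin k → ℕ) :=
  (Fintype.piFinset fun _ : Fin k => Finset.Icc 1 v).filter
    (fun i => ∀ a b : Fin k, a ≤ b → i a ≤ i b)

theorem snoc_mem_monotoneTuples_iff {k v u : ℕ} {i : Fin k → ℕ} :
    Fin.snoc i u ∈ monotoneTuples (k + 1) v ↔ u ∈ Icc 1 v ∧ i ∈ monotoneTuples k u := by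
  simp only [monotoneTuples, mem_filter, Fintype.mem_piFinset, mem_Icc, Fin.forall_iff_castSucc,
    Fin.snoc_castSucc, Fin.snoc_last, Fin.castSucc_le_castSucc_iff,
    Fin.le_last, Fin.last_le_iff, Fin.castSucc_ne_last]
  grind

theorem sum_monotoneTuples_succ {M : Type*} [AddCommMonoid M] {k : ℕ}
    (f : (Fin (k + 1) → ℕ) → M) (v : ℕ) :
    ∑ i ∈ monotoneTuples (k + 1) v, f i =
      ∑ u ∈ Icc 1 v, ∑ i ∈ monotoneTuples k u, f (Fin.snoc i u) := by
  rw [sum_sigma']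
  refine sum_bij' (fun i _ => ⟨i (Fin.last k), Fin.init i⟩) (fun p _ => Fin.snoc p.2 p.1)
    (fun i hi => ?_) (fun p hp => ?_) (fun i _ => Fin.snoc_init_self i)
    (fun p _ => by simp) (fun i _ => by rw [Fin.snoc_init_self])
  · rw [← Fin.snoc_init_self i, snoc_mem_monotoneTuples_iff] at hi
    simpa using hi
  · exact snoc_mem_monotoneTuples_iff.mpr (mem_sigma.mp hp)

theorem sum_monotoneTuples_prod_rpow_le {p : ℝ} (hp : 0 < p) {k : ℕ} (hk : (k : ℝ) ≤ p) (v : ℕ) :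
    ∑ i ∈ monotoneTuples k v, ∏ a, (i a : ℝ) ^ (-((p - 1) / p)) ≤
      p ^ k / k ! * (v : ℝ) ^ ((k : ℝ) / p) := by
  induction k generalizing v with
  | zero => simp [monotoneTuples]
  | succ k ih =>
    push_cast at hk
    set c : ℝ := (k + 1) / p
    have hc₀ : 0 < c := by positivity
    have hc₁ : c ≤ 1 := by rwa [div_le_one hp]
    have hexp (u : ℝ) (hu : 0 < u) : u ^ (-((p - 1) / p)) * u ^ ((k : ℝ) / p) = u ^ (c - 1) := by
      rw [← rpow_add hu]
      congr 1
      simp only [c]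
      field_simp
      ring
    calc ∑ i ∈ monotoneTuples (k + 1) v, ∏ a, (i a : ℝ) ^ (-((p - 1) / p))
        = ∑ u ∈ Icc 1 v, (u : ℝ) ^ (-((p - 1) / p)) *
            ∑ i ∈ monotoneTuples k u, ∏ a, (i a : ℝ) ^ (-((p - 1) / p)) := by
          simp only [sum_monotoneTuples_succ, mul_sum, Fin.prod_univ_castSucc, Fin.snoc_castSucc,
            Fin.snoc_last, mul_comm]
      _ ≤ ∑ u ∈ Icc 1 v,
            (u : ℝ) ^ (-((p - 1) / p)) * (p ^ k / k ! * (u : ℝ) ^ ((k : ℝ) / p)) := by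
          gcongr with u
          exact ih (by linarith) u
      _ = p ^ k / k ! * ∑ u ∈ Icc 1 v, (u : ℝ) ^ (c - 1) := by
          rw [mul_sum]
          refine sum_congr rfl fun u hu => ?_
          rw [mul_left_comm, hexp u (by exact_mod_cast (mem_Icc.mp hu).1)]
      _ ≤ p ^ k / k ! * ((v : ℝ) ^ c / c) := by
          gcongr
          exact sum_Icc_rpow_sub_one_le hc₀ hc₁ v
      _ = p ^ (k + 1) / (k + 1)! * (v : ℝ) ^ (((k + 1 : ℕ) : ℝ) / p) := by
          push_cast [c, Nat.factorial_succ]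
          field_simp
          ring

theorem stmt_3_general (m : ℕ) (hm : 2 ≤ m) (z : ℕ → ℝ)
    (hpos : ∀ j, 1 ≤ j → 0 < z j)
    (hbound : ∀ j : ℕ, 1 ≤ j → z j ≤ (j : ℝ) ^ (-(((m : ℝ) - 1) / (2 * m)))) :
    ∀ j : ℕ, 1 ≤ j →
      ∑ i ∈ (Fintype.piFinset fun _ : Fin (m - 1) => Finset.Icc 1 j).filter
          (fun i => ∀ a b : Fin (m - 1), a ≤ b → i a ≤ i b),
        ∏ a, z (i a) ^ 2
      ≤ Real.exp ((m : ℝ) - 1) * (j : ℝ) ^ (((m : ℝ) - 1) / m) := by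
  intro j _
  have hm₀ : (0 : ℝ) < m := by positivity
  have hm₁ : ((m - 1 : ℕ) : ℝ) = m - 1 := Nat.cast_pred (by omega)
  have hsq (i : Fin (m - 1) → ℕ) (hi : i ∈ monotoneTuples (m - 1) j) :
      ∏ a, z (i a) ^ 2 ≤ ∏ a, (i a : ℝ) ^ (-(((m : ℝ) - 1) / m)) := by
    refine prod_le_prod (fun a _ => sq_nonneg _) fun a _ => ?_
    have hia : 1 ≤ i a := (mem_Icc.mp (Fintype.mem_piFinset.mp (mem_filter.mp hi).1 a)).1
    calc z (i a) ^ 2 ≤ ((i a : ℝ) ^ (-(((m : ℝ) - 1) / (2 * m)))) ^ 2 := by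
          gcongr
          exacts [(hpos _ hia).le, hbound _ hia]
      _ = (i a : ℝ) ^ (-(((m : ℝ) - 1) / m)) := by
          rw [← rpow_mul_natCast (by positivity)]
          congr 1
          field_simp
          ring
  calc ∑ i ∈ monotoneTuples (m - 1) j, ∏ a, z (i a) ^ 2
      ≤ ∑ i ∈ monotoneTuples (m - 1) j, ∏ a, (i a : ℝ) ^ (-(((m : ℝ) - 1) / m)) :=
        sum_le_sum hsq
    _ ≤ (m : ℝ) ^ (m - 1) / (m - 1)! * (j : ℝ) ^ (((m - 1 : ℕ) : ℝ) / m) :=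
        sum_monotoneTuples_prod_rpow_le hm₀ (by linarith) j
    _ ≤ exp ((m : ℝ) - 1) * (j : ℝ) ^ (((m : ℝ) - 1) / m) := by
        rw [hm₁]
        gcongr
        rw [div_le_iff₀ (by positivity)]
        simpa [hm₁] using pow_le_exp_mul_factorial (m - 1)

/-- For `m ≥ 2` and a nonincreasing positive sequence `z` with
`zⱼ ≤ j^{-(m-1)/(2m)}`, the sum over nondecreasing `(m-1)`-tuples
`1 ≤ i₁ ≤ ⋯ ≤ i_{m-1} ≤ j` of `z_{i₁}²⋯z_{i_{m-1}}²` is at most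
`e^{m-1} · j^{(m-1)/m}`. -/
theorem stmt_3 (m : ℕ) (hm : 2 ≤ m) (z : ℕ → ℝ)
    (hpos : ∀ j, 1 ≤ j → 0 < z j)
    (hmono : ∀ j k, 1 ≤ j → j ≤ k → z k ≤ z j)
    (hbound : ∀ j : ℕ, 1 ≤ j → z j ≤ (j : ℝ) ^ (-(((m : ℝ) - 1) / (2 * m)))) :
    ∀ j : ℕ, 1 ≤ j →
      ∑ i ∈ (Fintype.piFinset fun _ : Fin (m - 1) => Finset.Icc 1 j).filter
          (fun i => ∀ a b : Fin (m - 1), a ≤ b → i a ≤ i b),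
        ∏ a, z (i a) ^ 2
      ≤ Real.exp ((m : ℝ) - 1) * (j : ℝ) ^ (((m : ℝ) - 1) / m) :=
  stmt_3_general m hm z hpos hbound
end

section
/- Suppose a sequence space X (a vector subspace of ℂ^ℕ) satisfies mon H_∞(B_{ℓ∞}) = X ∩ B_{ℓ∞}, where mon H_∞(B_{ℓ∞}) contains every sequence z with limsup_n (1/log n) ∑_{j=1}^n (z*ⱼ)² < 1 and is contained in the set of z with limsup_n (1/log n) ∑_{j=1}^n (z*ⱼ)² ≤ 1. Then a contradiction follows; i.e., no such vector space X exists. -/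
open Filter

/-- The decreasing rearrangement of a sequence: `decreasingRearrangement z n` is the
`(n+1)`-st term `z*_{n+1}`, i.e. the infimum over finite sets `J` of cardinality `≤ n`
of the supremum of `|z j|` for `j ∉ J`. -/
noncomputable def decreasingRearrangement (z : ℕ → ℂ) (n : ℕ) : ℝ :=
  ⨅ J : {J : Finset ℕ // J.card ≤ n}, ⨆ j : {j : ℕ // j ∉ J.1}, ‖z j‖

/-- The open unit ball of `ℓ∞`: sequences with supremum norm `< 1`. -/
def ballLinfty : Set (ℕ → ℂ) := {z | ∃ r < (1 : ℝ), ∀ n, ‖z n‖ ≤ r}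

/-! If such an `X` existed, `z = (1/2) / √(n + 4)` would lie in `mon ⊆ X`, since for
`c / √(n + 4)` the limsup equals `c²` (the sequence is its own decreasing rearrangement and
`∑_{j<n} 1/(j + 4) = log n + O(1)`). Then `3 z = (3/2) / √(n + 4)` lies in `X` and still in the
ball, hence in `mon`, although its limsup is `9/4 > 1`. -/

open Topology

theorem decreasingRearrangement_eq_norm_of_antitone {z : ℕ → ℂ}
    (hz : Antitone fun n => ‖z n‖) (n : ℕ) : decreasingRearrangement z n = ‖z n‖ := by
  have hbdd : ∀ J : Finset ℕ, BddAbove (Set.range fun j : {j : ℕ // j ∉ J} => ‖z j‖) :=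
    fun J => ⟨‖z 0‖, by rintro _ ⟨j, rfl⟩; exact hz (Nat.zero_le _)⟩
  have : Nonempty {J : Finset ℕ // J.card ≤ n} := ⟨⟨∅, by simp⟩⟩
  have hmiss (J : {J : Finset ℕ // J.card ≤ n}) : ∃ j ≤ n, j ∉ J.1 := by
    by_contra! h
    have := Finset.card_le_card fun j hj => h j (Nat.lt_succ_iff.mp (Finset.mem_range.mp hj))
    simp only [Finset.card_range] at this
    omega
  have hsup (J : {J : Finset ℕ // J.card ≤ n}) : ‖z n‖ ≤ ⨆ j : {j : ℕ // j ∉ J.1}, ‖z j‖ :=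
    let ⟨j, hjn, hjJ⟩ := hmiss J
    (hz hjn).trans (le_ciSup (hbdd _) ⟨j, hjJ⟩)
  have hsup_range : ⨆ j : {j : ℕ // j ∉ Finset.range n}, ‖z j‖ = ‖z n‖ := by
    have : Nonempty {j : ℕ // j ∉ Finset.range n} := ⟨⟨n, by simp⟩⟩
    refine le_antisymm (ciSup_le fun j => hz ?_) (le_ciSup (hbdd _) ⟨n, by simp⟩)
    simpa using j.2
  refine le_antisymm ?_ (le_ciInf hsup)
  have hbdd_below : BddBelow (Set.range fun J : {J : Finset ℕ // J.card ≤ n} =>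
      ⨆ j : {j : ℕ // j ∉ J.1}, ‖z j‖) :=
    ⟨‖z n‖, by rintro _ ⟨J, rfl⟩; exact hsup J⟩
  exact (ciInf_le hbdd_below ⟨Finset.range n, by simp⟩).trans hsup_range.le

theorem tendsto_sum_inv_add_sub_log (k : ℕ) :
    Tendsto (fun n : ℕ => ∑ j ∈ Finset.range n, ((j : ℝ) + k + 1)⁻¹ - Real.log n) atTop
      (𝓝 (Real.eulerMascheroniConstant - harmonic k)) := by
  have hsum (n : ℕ) :
      ∑ j ∈ Finset.range n, ((j : ℝ) + k + 1)⁻¹ = harmonic (n + k) - harmonic k := by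
    simp only [harmonic, add_comm n k, Finset.sum_range_add]
    push_cast
    rw [add_sub_cancel_left]
    exact Finset.sum_congr rfl fun j _ => by ring
  have hharm : Tendsto (fun n : ℕ => (harmonic (n + k) : ℝ) - Real.log ↑(n + k)) atTop
      (𝓝 Real.eulerMascheroniConstant) :=
    Real.tendsto_harmonic_sub_log.comp (tendsto_add_atTop_nat k)
  have hlog : Tendsto (fun n : ℕ => Real.log ((n : ℝ) + k) - Real.log n) atTop (𝓝 0) :=
    (Real.tendsto_log_comp_add_sub_log k).comp tendsto_natCast_atTop_atTop
  convert (hharm.add hlog).sub_const (harmonic k : ℝ) using 2 with n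
  · rw [hsum]; push_cast; ring
  · ring

theorem tendsto_one_div_log_mul_of_tendsto_sub_log {u : ℕ → ℝ} {L : ℝ}
    (hu : Tendsto (fun n => u n - Real.log n) atTop (𝓝 L)) :
    Tendsto (fun n : ℕ => 1 / Real.log n * u n) atTop (𝓝 1) := by
  have hinv : Tendsto (fun n : ℕ => 1 / Real.log n) atTop (𝓝 0) := by
    simpa [one_div, Function.comp_def, Pi.inv_def] using
      (Real.tendsto_log_atTop.comp tendsto_natCast_atTop_atTop).inv_tendsto_atTop
  have := (hinv.mul hu).add_const 1
  rw [zero_mul, zero_add] at this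
  refine this.congr' ?_
  filter_upwards [eventually_gt_atTop 1] with n hn
  have : Real.log n ≠ 0 := (Real.log_pos (by exact_mod_cast hn)).ne'
  field_simp
  ring

-- The shift by 4 keeps the sup norm at `|c| / 2`, so `invSqrtSeq (3 / 2)` still lies in the ball.
noncomputable def invSqrtSeq (c : ℝ) (n : ℕ) : ℂ := ((c / √((n : ℝ) + 4) : ℝ) : ℂ)

theorem norm_invSqrtSeq (c : ℝ) (n : ℕ) : ‖invSqrtSeq c n‖ = |c| / √((n : ℝ) + 4) := by
  rw [invSqrtSeq, Complex.norm_real, Real.norm_eq_abs, abs_div,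
    abs_of_nonneg (Real.sqrt_nonneg _)]

theorem antitone_norm_invSqrtSeq (c : ℝ) : Antitone fun n => ‖invSqrtSeq c n‖ := by
  intro m n hmn
  simp only [norm_invSqrtSeq]
  gcongr

theorem invSqrtSeq_mem_ballLinfty {c : ℝ} (hc : |c| < 2) : invSqrtSeq c ∈ ballLinfty := by
  refine ⟨|c| / 2, by linarith, fun n => ?_⟩
  rw [norm_invSqrtSeq]
  have : (2 : ℝ) ≤ √((n : ℝ) + 4) := Real.le_sqrt_of_sq_le (by norm_num)
  gcongr

theorem smul_invSqrtSeq (a c : ℝ) : (a : ℂ) • invSqrtSeq c = invSqrtSeq (a * c) := by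
  ext n
  simp only [invSqrtSeq, Pi.smul_apply, smul_eq_mul]
  push_cast
  ring

theorem limsup_invSqrtSeq (c : ℝ) :
    limsup (fun n : ℕ => (1 / Real.log n) *
      ∑ j ∈ Finset.range n, decreasingRearrangement (invSqrtSeq c) j ^ 2) atTop = c ^ 2 := by
  have hterm (j : ℕ) :
      decreasingRearrangement (invSqrtSeq c) j ^ 2 = c ^ 2 * ((j : ℝ) + 3 + 1)⁻¹ := by
    rw [decreasingRearrangement_eq_norm_of_antitone (antitone_norm_invSqrtSeq c),
      norm_invSqrtSeq, div_pow, sq_abs, Real.sq_sqrt (by positivity)]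
    ring
  simp only [hterm, ← Finset.mul_sum]
  have h3 := tendsto_sum_inv_add_sub_log 3
  rw [Nat.cast_ofNat] at h3
  have := (tendsto_one_div_log_mul_of_tendsto_sub_log h3).const_mul (c ^ 2)
  rw [mul_one] at this
  refine (this.congr fun n => ?_).limsup_eq
  ring

/-- There is no vector subspace `X` of `ℂ^ℕ` with
`mon H_∞(B_{ℓ∞}) = X ∩ B_{ℓ∞}`, where `mon H_∞(B_{ℓ∞})` contains every `z ∈ B_{ℓ∞}`
with `limsup (1/log n) ∑_{j=1}^n (z*ⱼ)² < 1` and is contained in the set of those `z`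
with `limsup (1/log n) ∑_{j=1}^n (z*ⱼ)² ≤ 1`. -/
theorem stmt_4 (X : Submodule ℂ (ℕ → ℂ)) (mon : Set (ℕ → ℂ))
    (hlow : ∀ z : ℕ → ℂ, z ∈ ballLinfty →
      limsup (fun n : ℕ =>
        (1 / Real.log n) * ∑ j ∈ Finset.range n, decreasingRearrangement z j ^ 2)
        atTop < 1 → z ∈ mon)
    (hup : ∀ z ∈ mon,
      limsup (fun n : ℕ =>
        (1 / Real.log n) * ∑ j ∈ Finset.range n, decreasingRearrangement z j ^ 2)
        atTop ≤ 1)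
    (heq : mon = (X : Set (ℕ → ℂ)) ∩ ballLinfty) :
    False := by
  have half_mem : invSqrtSeq (1 / 2) ∈ X := by
    have := hlow (invSqrtSeq (1 / 2)) (invSqrtSeq_mem_ballLinfty (by norm_num))
      (by rw [limsup_invSqrtSeq]; norm_num)
    rw [heq] at this
    exact this.1
  have three_halves_mem : invSqrtSeq (3 / 2) ∈ mon := by
    rw [heq]
    refine ⟨?_, invSqrtSeq_mem_ballLinfty (by norm_num)⟩
    have := X.smul_mem ((3 : ℝ) : ℂ) half_mem
    rwa [smul_invSqrtSeq, show (3 : ℝ) * (1 / 2) = 3 / 2 by norm_num] at this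
  have := hup _ three_halves_mem
  rw [limsup_invSqrtSeq] at this
  norm_num at this
end

section
/- For every m ≥ 1, every z ∈ ℓ₂, and every f ∈ H₂^m(𝕋^∞) (the m-homogeneous part of the Hardy space), one has ∑_{|α| = m} |f̂(α) z^α| ≤ ‖z‖₂^m · ‖f‖₂. In particular ℓ₂ ⊆ mon H₂^m(𝕋^∞). -/
/-!
By Cauchy–Schwarz, `∑_{|α|=m} |f̂(α)| |z^α|` is at most
`(∑ |f̂(α)|²)^{1/2} (∑_{|α|=m} |z|^{2α})^{1/2}`. The characters `w ↦ w^γ` of `𝕋^∞` are orthonormal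
in `L²` of the Haar measure, so Bessel's inequality bounds the first factor by `‖f‖₂`. For the
second, `(∑ₙ |zₙ|²)^m` expands as the sum of `∏ᵢ |z_{g(i)}|²` over all `g : Fin m → ℕ`, and every
`α` with `|α| = m` is the multiset of values of some such `g`; hence
`∑_{|α|=m} |z|^{2α} ≤ ‖z‖₂^{2m}`.
-/

open MeasureTheory

noncomputable instance : MeasurableSpace Circle := borel Circle
instance : BorelSpace Circle := ⟨rfl⟩

/-- The `α`-th Fourier coefficient of `f : 𝕋^∞ → ℂ` with respect to the Haar
probability measure `μ`: `f̂(α) = ∫ f(w) w^{-α} dμ(w)`. -/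
noncomputable def fourierCoeffInfty (μ : Measure (ℕ → Circle))
    (f : (ℕ → Circle) → ℂ) (α : ℕ →₀ ℤ) : ℂ :=
  ∫ w, f w * α.prod (fun n k => ((w n : ℂ)) ^ (-k)) ∂μ

open scoped ENNReal ComplexConjugate InnerProductSpace

section Characters

variable {G : Type*} [Group G] [MeasurableSpace G]

theorem integral_coe_circle_eq_zero [MeasurableMul G] (μ : Measure G) [μ.IsMulLeftInvariant]
    {χ : G →* Circle} (hχ : χ ≠ 1) : ∫ g, (χ g : ℂ) ∂μ = 0 := by
  obtain ⟨g, hg⟩ : ∃ g, χ g ≠ 1 := by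
    by_contra! h
    exact hχ (MonoidHom.ext h)
  have hinv : ∫ w, (χ (g * w) : ℂ) ∂μ = ∫ w, (χ w : ℂ) ∂μ :=
    integral_mul_left_eq_self (fun w => (χ w : ℂ)) g
  simp only [map_mul, Circle.coe_mul, integral_const_mul] at hinv
  have hmul : ((χ g : ℂ) - 1) * ∫ w, (χ w : ℂ) ∂μ = 0 := by rw [sub_mul, hinv, one_mul, sub_self]
  exact (mul_eq_zero.1 hmul).resolve_left (sub_ne_zero.2 (Circle.coe_eq_one.not.2 hg))

variable [TopologicalSpace G] [OpensMeasurableSpace G] (μ : Measure G)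

theorem memLp_coe_circle [IsFiniteMeasure μ] (χ : G →ₜ* Circle) (p : ℝ≥0∞) :
    MemLp (fun g => (χ g : ℂ)) p μ :=
  MemLp.of_bound (continuous_subtype_val.comp χ.continuous).aestronglyMeasurable 1
    (ae_of_all _ fun _ => (Circle.norm_coe _).le)

noncomputable def characterLp [IsFiniteMeasure μ] (χ : G →ₜ* Circle) : Lp ℂ 2 μ :=
  (memLp_coe_circle μ χ 2).toLp _

theorem inner_characterLp_left [IsFiniteMeasure μ] (χ : G →ₜ* Circle) {f : G → ℂ}
    (hf : MemLp f 2 μ) :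
    ⟪characterLp μ χ, hf.toLp f⟫_ℂ = ∫ g, f g * ((χ g)⁻¹ : Circle) ∂μ := by
  rw [L2.inner_def]
  refine integral_congr_ae ?_
  filter_upwards [(memLp_coe_circle μ χ 2).coeFn_toLp, hf.coeFn_toLp] with g hχ hf
  rw [characterLp, hχ, hf, RCLike.inner_apply, Circle.coe_inv_eq_conj, mul_comm]

variable [MeasurableMul G] [μ.IsMulLeftInvariant] [IsProbabilityMeasure μ]

open Classical in
theorem inner_characterLp (χ ψ : G →ₜ* Circle) :
    ⟪characterLp μ χ, characterLp μ ψ⟫_ℂ = if χ = ψ then 1 else 0 := by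
  refine (inner_characterLp_left μ χ (memLp_coe_circle μ ψ 2)).trans ?_
  have hquot : ∀ g, (ψ g : ℂ) * ((χ g)⁻¹ : Circle) = ((χ⁻¹ * ψ) g : Circle) := fun g => by
    rw [mul_comm]; rfl
  simp_rw [hquot]
  split_ifs with h
  · simp [h]
  · exact integral_coe_circle_eq_zero μ (χ := (χ⁻¹ * ψ : G →ₜ* Circle).toMonoidHom)
      fun h1 => h (inv_mul_eq_one.1 (ContinuousMonoidHom.toMonoidHom_injective h1))

theorem orthonormal_characterLp {ι : Type*} {χ : ι → G →ₜ* Circle} (hχ : Function.Injective χ) :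
    Orthonormal ℂ fun i => characterLp μ (χ i) := by
  classical
  refine orthonormal_iff_ite.2 fun i j => ?_
  rw [inner_characterLp, hχ.eq_iff]

end Characters

theorem Circle.eq_of_forall_zpow_eq {a b : ℤ} (h : ∀ x : Circle, x ^ a = x ^ b) : a = b := by
  by_contra hab
  have hk : ((a - b : ℤ) : ℝ) ≠ 0 := Int.cast_ne_zero.2 (sub_ne_zero.2 hab)
  apply Circle.exp_pi_ne_one
  set x := Circle.exp (Real.pi / (a - b : ℤ))
  calc Circle.exp Real.pi = x ^ (a - b) := by rw [← Circle.exp_intCast_mul, mul_div_cancel₀ _ hk]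
    _ = 1 := by rw [zpow_sub, h, mul_inv_cancel]

section TorusCharacters

variable {ι : Type*}

noncomputable def torusChar (γ : ι →₀ ℤ) : (ι → Circle) →ₜ* Circle where
  toFun w := γ.prod fun n k => w n ^ k
  map_one' := by simp
  map_mul' w v := by simp only [Pi.mul_apply, mul_zpow, Finsupp.prod_mul]
  continuous_toFun := by
    unfold Finsupp.prod
    fun_prop

theorem torusChar_apply (γ : ι →₀ ℤ) (w : ι → Circle) :
    torusChar γ w = γ.prod fun n k => w n ^ k := rfl

theorem torusChar_mulSingle [DecidableEq ι] (γ : ι →₀ ℤ) (n : ι) (x : Circle) :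
    torusChar γ (Pi.mulSingle n x) = x ^ γ n := by
  rw [torusChar_apply, Finsupp.prod_eq_single n]
  · simp
  · intro b _ hb
    simp [Pi.mulSingle_eq_of_ne hb]
  · simp

theorem torusChar_injective : Function.Injective (torusChar (ι := ι)) := by
  classical
  intro β γ h
  ext n
  refine Circle.eq_of_forall_zpow_eq fun x => ?_
  rw [← torusChar_mulSingle, ← torusChar_mulSingle, h]

theorem coe_inv_torusChar (γ : ι →₀ ℤ) (w : ι → Circle) :
    (((torusChar γ w)⁻¹ : Circle) : ℂ) = γ.prod fun n k => (w n : ℂ) ^ (-k) := by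
  rw [torusChar_apply, ← Finsupp.prod_inv]
  exact map_finsuppProd Circle.coeHom _ _ |>.trans (by simp [zpow_neg]; rfl)

end TorusCharacters

theorem fourierCoeffInfty_eq_inner (μ : Measure (ℕ → Circle)) [IsFiniteMeasure μ]
    {f : (ℕ → Circle) → ℂ} (hf : MemLp f 2 μ) (γ : ℕ →₀ ℤ) :
    fourierCoeffInfty μ f γ = ⟪characterLp μ (torusChar γ), hf.toLp f⟫_ℂ := by
  simp_rw [inner_characterLp_left, coe_inv_torusChar, fourierCoeffInfty]

theorem summable_and_tsum_norm_fourierCoeffInfty_sq_le (μ : Measure (ℕ → Circle))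
    [μ.IsMulLeftInvariant] [IsProbabilityMeasure μ] {f : (ℕ → Circle) → ℂ} (hf : MemLp f 2 μ) :
    (Summable fun γ => ‖fourierCoeffInfty μ f γ‖ ^ 2) ∧
      ∑' γ, ‖fourierCoeffInfty μ f γ‖ ^ 2 ≤ (eLpNorm f 2 μ).toReal ^ 2 := by
  have hON := orthonormal_characterLp μ (torusChar_injective (ι := ℕ))
  simp_rw [fourierCoeffInfty_eq_inner μ hf]
  exact ⟨hON.inner_products_summable _, Lp.norm_toLp f hf ▸ hON.tsum_inner_products_le _⟩
theorem ENNReal.tsum_fin_pi_prod_eq_pow {ι : Type*} (u : ι → ℝ≥0∞) (m : ℕ) :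
    ∑' g : Fin m → ι, ∏ i, u (g i) = (∑' n, u n) ^ m := by
  induction m with
  | zero => simp
  | succ m ih =>
    rw [← (Fin.consEquiv fun _ => ι).tsum_eq, ENNReal.tsum_prod', pow_succ', ← ih,
      ← ENNReal.tsum_mul_right]
    refine tsum_congr fun n => ?_
    rw [← ENNReal.tsum_mul_left]
    refine tsum_congr fun g => ?_
    simp [Fin.consEquiv, Fin.prod_univ_succ]

theorem Multiset.toFinsupp_prod_pow {ι M : Type*} [DecidableEq ι] [CommMonoid M] (u : ι → M)
    (s : Multiset ι) : (Multiset.toFinsupp s).prod (fun n k => u n ^ k) = (s.map u).prod := by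
  simp [Finsupp.prod, Finset.prod_multiset_map_count]

theorem Sym.ofVector_surjective {ι : Type*} {m : ℕ} :
    Function.Surjective (Sym.ofVector (α := ι) (n := m)) := by
  rintro ⟨⟨l⟩, h⟩
  exact ⟨⟨l, h⟩, rfl⟩

theorem ENNReal.tsum_finsupp_prod_pow_le {ι : Type*} (u : ι → ℝ≥0∞) (m : ℕ) :
    ∑' α : {α : ι →₀ ℕ // α.sum (fun _ k => k) = m}, α.1.prod (fun n k => u n ^ k)
      ≤ (∑' n, u n) ^ m := by
  classical
  let toSym : (Fin m → ι) → Sym ι m := fun g => Sym.ofVector ((Equiv.vectorEquivFin ι m).symm g)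
  have hsurj : Function.Surjective toSym :=
    Sym.ofVector_surjective.comp (Equiv.vectorEquivFin ι m).symm.surjective
  calc ∑' α : {α : ι →₀ ℕ // α.sum (fun _ k => k) = m}, α.1.prod (fun n k => u n ^ k)
      = ∑' s : Sym ι m, ((s : Multiset ι).map u).prod := by
        -- `Sym.equivNatSum` writes the degree condition with `id`: the same subtype up to defeq
        refine ((Sym.equivNatSum ι m).tsum_eq fun α => α.1.prod fun n k => u n ^ k).symm.trans ?_
        exact tsum_congr fun s => Multiset.toFinsupp_prod_pow u s
    _ ≤ ∑' g : Fin m → ι, ((toSym g : Multiset ι).map u).prod :=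
        ENNReal.tsum_le_tsum_comp_of_surjective hsurj _
    _ = ∑' g : Fin m → ι, ∏ i, u (g i) := by
        refine tsum_congr fun g => ?_
        change (((List.Vector.ofFn g).toList : Multiset ι).map u).prod = _
        rw [List.Vector.toList_ofFn, Multiset.map_coe, Multiset.prod_coe, List.map_ofFn,
          List.prod_ofFn]
        rfl
    _ = (∑' n, u n) ^ m := ENNReal.tsum_fin_pi_prod_eq_pow u m

theorem summable_and_tsum_le_of_tsum_ofReal_le {X : Type*} {a : X → ℝ} (ha : ∀ x, 0 ≤ a x)
    {c : ℝ} (hc : 0 ≤ c) (h : ∑' x, ENNReal.ofReal (a x) ≤ ENNReal.ofReal c) :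
    Summable a ∧ ∑' x, a x ≤ c := by
  have hsum : Summable a := by
    simpa [ENNReal.toReal_ofReal (ha _)] using
      ENNReal.summable_toReal (h.trans_lt ENNReal.ofReal_lt_top).ne
  refine ⟨hsum, (ENNReal.ofReal_le_ofReal_iff hc).1 ?_⟩
  rwa [ENNReal.ofReal_tsum_of_nonneg ha hsum]

theorem summable_and_tsum_finsupp_prod_pow_le {ι : Type*} {u : ι → ℝ} (hu : ∀ n, 0 ≤ u n)
    (hs : Summable u) (m : ℕ) :
    (Summable fun α : {α : ι →₀ ℕ // α.sum (fun _ k => k) = m} => α.1.prod fun n k => u n ^ k) ∧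
      ∑' α : {α : ι →₀ ℕ // α.sum (fun _ k => k) = m}, α.1.prod (fun n k => u n ^ k)
        ≤ (∑' n, u n) ^ m := by
  refine summable_and_tsum_le_of_tsum_ofReal_le
    (a := fun α : {α : ι →₀ ℕ // α.sum (fun _ k => k) = m} => α.1.prod fun n k => u n ^ k)
    (fun α => Finset.prod_nonneg fun n _ => pow_nonneg (hu n) _)
    (pow_nonneg (tsum_nonneg hu) _) ?_
  have hprod : ∀ α : ι →₀ ℕ, ENNReal.ofReal (α.prod fun n k => u n ^ k)
      = α.prod fun n k => ENNReal.ofReal (u n) ^ k := fun α => by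
    rw [Finsupp.prod, ENNReal.ofReal_prod_of_nonneg fun n _ => pow_nonneg (hu n) _]
    exact Finset.prod_congr rfl fun n _ => ENNReal.ofReal_pow (hu n) _
  simp only [hprod, ENNReal.ofReal_pow (tsum_nonneg hu), ENNReal.ofReal_tsum_of_nonneg hu hs]
  exact ENNReal.tsum_finsupp_prod_pow_le _ m

theorem summable_and_tsum_mul_le_sqrt_mul_sqrt {X : Type*} {f g : X → ℝ} (hf : ∀ x, 0 ≤ f x)
    (hg : ∀ x, 0 ≤ g x) (hf2 : Summable fun x => f x ^ 2) (hg2 : Summable fun x => g x ^ 2) :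
    (Summable fun x => f x * g x) ∧
      ∑' x, f x * g x ≤ √(∑' x, f x ^ 2) * √(∑' x, g x ^ 2) := by
  have h := Real.summable_and_inner_le_Lp_mul_Lq_tsum_of_nonneg
    Real.HolderConjugate.two_two hf hg (by simpa using hf2) (by simpa using hg2)
  simp only [Real.rpow_two] at h
  rwa [Real.sqrt_eq_rpow, Real.sqrt_eq_rpow]

theorem norm_finsupp_prod_pow_sq {ι 𝕜 : Type*} [NormedField 𝕜] (α : ι →₀ ℕ) (z : ι → 𝕜) :
    ‖α.prod fun n k => z n ^ k‖ ^ 2 = α.prod fun n k => (‖z n‖ ^ 2) ^ k := by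
  simp only [Finsupp.prod, norm_prod, norm_pow, ← Finset.prod_pow, ← pow_mul, mul_comm]

theorem stmt_12_general (m : ℕ)
    (μ : Measure (ℕ → Circle)) [μ.IsHaarMeasure] [IsProbabilityMeasure μ]
    (z : ℕ → ℂ) (hz2 : Summable fun n => ‖z n‖ ^ 2)
    (f : (ℕ → Circle) → ℂ) (hf : MemLp f 2 μ) :
    Summable (fun α : {α : ℕ →₀ ℕ // α.sum (fun _ k => k) = m} =>
      ‖fourierCoeffInfty μ f ((α : ℕ →₀ ℕ).mapRange (fun k : ℕ => (k : ℤ)) rfl)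
        * (α : ℕ →₀ ℕ).prod fun n k => z n ^ k‖)
    ∧ ∑' α : {α : ℕ →₀ ℕ // α.sum (fun _ k => k) = m},
        ‖fourierCoeffInfty μ f ((α : ℕ →₀ ℕ).mapRange (fun k : ℕ => (k : ℤ)) rfl)
          * (α : ℕ →₀ ℕ).prod fun n k => z n ^ k‖
      ≤ Real.sqrt (∑' n, ‖z n‖ ^ 2) ^ m * (eLpNorm f 2 μ).toReal := by
  let ι : {α : ℕ →₀ ℕ // α.sum (fun _ k => k) = m} → ℕ →₀ ℤ := fun α => α.1.mapRange (↑) rfl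
  have hι : Function.Injective ι :=
    (Finsupp.mapRange_injective _ rfl Nat.cast_injective).comp Subtype.val_injective
  obtain ⟨hcoeff, hcoeff_le⟩ := summable_and_tsum_norm_fourierCoeffInfty_sq_le μ hf
  obtain ⟨hmono, hmono_le⟩ :=
    summable_and_tsum_finsupp_prod_pow_le (fun n => sq_nonneg ‖z n‖) hz2 m
  simp only [← norm_finsupp_prod_pow_sq] at hmono hmono_le
  simp only [norm_mul]
  obtain ⟨hsum, hle⟩ := summable_and_tsum_mul_le_sqrt_mul_sqrt (fun _ => norm_nonneg _)
    (fun _ => norm_nonneg _) (hcoeff.comp_injective hι) hmono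
  refine ⟨hsum, hle.trans ?_⟩
  rw [mul_comm]
  gcongr
  · rw [Real.sqrt_le_left (by positivity), ← pow_mul, mul_comm, pow_mul,
      Real.sq_sqrt (tsum_nonneg fun n => sq_nonneg _)]
    exact hmono_le
  · rw [Real.sqrt_le_left ENNReal.toReal_nonneg]
    exact (tsum_comp_le_tsum_of_inj hcoeff (fun _ => sq_nonneg _) hι).trans hcoeff_le

/-- For every `m ≥ 1`, every `z ∈ ℓ₂` and every `f ∈ H₂^m(𝕋^∞)` (the
`m`-homogeneous part of the Hardy space), `∑_{|α|=m} |f̂(α) z^α| ≤ ‖z‖₂^m ‖f‖₂`;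
in particular `ℓ₂ ⊆ mon H₂^m(𝕋^∞)`. -/
theorem stmt_12 (m : ℕ) (hm : 1 ≤ m)
    (μ : Measure (ℕ → Circle)) [μ.IsHaarMeasure] [IsProbabilityMeasure μ]
    (z : ℕ → ℂ) (hz2 : Summable fun n => ‖z n‖ ^ 2)
    (f : (ℕ → Circle) → ℂ) (hf : MemLp f 2 μ)
    (hHm : ∀ α : ℕ →₀ ℤ, fourierCoeffInfty μ f α ≠ 0 →
      (∀ n, 0 ≤ α n) ∧ α.sum (fun _ k => k) = (m : ℤ)) :
    Summable (fun α : {α : ℕ →₀ ℕ // α.sum (fun _ k => k) = m} =>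
      ‖fourierCoeffInfty μ f ((α : ℕ →₀ ℕ).mapRange (fun k : ℕ => (k : ℤ)) rfl)
        * (α : ℕ →₀ ℕ).prod fun n k => z n ^ k‖)
    ∧ ∑' α : {α : ℕ →₀ ℕ // α.sum (fun _ k => k) = m},
        ‖fourierCoeffInfty μ f ((α : ℕ →₀ ℕ).mapRange (fun k : ℕ => (k : ℤ)) rfl)
          * (α : ℕ →₀ ℕ).prod fun n k => z n ^ k‖
      ≤ Real.sqrt (∑' n, ‖z n‖ ^ 2) ^ m * (eLpNorm f 2 μ).toReal :=
  stmt_12_general m μ z hz2 f hf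
end

section
/- Let m ≥ 2, n ≥ 1, and p ≥ 1 with p ≤ m. For every tuple (i₁,…,i_{m−p}, j₁,…,j_p) with 1 ≤ i₁ ≤ ⋯ ≤ i_{m−p} and 1 ≤ j₁ ≤ ⋯ ≤ j_p, the cardinality |(𝐢,𝐣)| of the set of permutations of the concatenated m-tuple satisfies |(𝐢,𝐣)| ≤ m(m−1)⋯(m−p+1) · |𝐢|, where |𝐢| is the number of distinct permutations of the (m−p)-tuple 𝐢. -/
noncomputable def numPerms {L : ℕ} (k : Fin L → ℕ) : ℕ :=
  Set.ncard {k' : Fin L → ℕ | ∃ σ : Equiv.Perm (Fin L), k' = k ∘ σ}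

/-!
The rearrangements of `k : Fin L → ℕ` form its orbit under precomposition with permutations,
so by orbit–stabilizer `numPerms k * #{σ | k ∘ σ = k} = L!`. Extending permutations of the first
`L` coordinates by the identity embeds the stabilizer of `i` into that of `Fin.append i j`, hence
`numPerms (Fin.append i j) * #Stab i ≤ (L + p)! = numPerms i * #Stab i * (L + p).descFactorial p`.
-/

open Equiv MulAction Nat

lemma numPerms_eq_ncard_orbit {L : ℕ} (k : Fin L → ℕ) :
    numPerms k = (orbit (Perm (Fin L))ᵈᵐᵃ k).ncard := by
  rw [numPerms]
  congr 1
  ext k'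
  simp only [Set.mem_ofPred_eq, mem_orbit_iff, DomMulAct.mk.surjective.exists, eq_comm]
  rfl

lemma DomMulAct.card_stabilizer_perm {α ι : Type*} (f : α → ι) :
    Nat.card (stabilizer (Perm α)ᵈᵐᵃ f) = Nat.card {σ : Perm α // f ∘ σ = f} :=
  Nat.card_congr (subtypeEquiv DomMulAct.mk.symm fun _ ↦ DomMulAct.mem_stabilizer_iff)

lemma numPerms_mul_card_stabilizer {L : ℕ} (k : Fin L → ℕ) :
    numPerms k * Nat.card {σ : Perm (Fin L) // k ∘ σ = k} = L ! := by
  rw [numPerms_eq_ncard_orbit, ← index_stabilizer, ← DomMulAct.card_stabilizer_perm, mul_comm,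
    Subgroup.card_mul_index, Nat.card_congr DomMulAct.mk.symm, Nat.card_perm, Nat.card_fin]

lemma card_stabilizer_le_of_comp_embedding {α β ι : Type*} [Fintype α] [Finite β]
    [DecidableEq β] (e : α ↪ β) {f : α → ι} {F : β → ι} (hF : F ∘ e = f) :
    Nat.card {σ : Perm α // f ∘ σ = f} ≤ Nat.card {τ : Perm β // F ∘ τ = F} := by
  have hFe (a : α) : F (e a) = f a := congrFun hF a
  refine Nat.card_le_card_of_injective
    (fun σ ↦ ⟨σ.1.viaFintypeEmbedding e, funext fun b ↦ ?_⟩) fun σ₁ σ₂ h ↦ ?_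
  · by_cases hb : b ∈ Set.range e
    · obtain ⟨a, rfl⟩ := hb
      simp only [Function.comp_apply, Perm.viaFintypeEmbedding_apply_image, hFe]
      exact congrFun σ.2 a
    · simp only [Function.comp_apply, Perm.viaFintypeEmbedding_apply_notMem_range _ _ hb]
  · ext a
    simpa using congrArg (fun τ : {τ : Perm β // F ∘ τ = F} ↦ τ.1 (e a)) h

lemma numPerms_append_le {L p : ℕ} (i : Fin L → ℕ) (j : Fin p → ℕ) :
    numPerms (Fin.append i j) ≤ (L + p).descFactorial p * numPerms i := by
  set s := Nat.card {σ : Perm (Fin L) // i ∘ σ = i}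
  set S := Nat.card {τ : Perm (Fin (L + p)) // Fin.append i j ∘ τ = Fin.append i j}
  have : Nonempty {σ : Perm (Fin L) // i ∘ σ = i} := ⟨⟨1, rfl⟩⟩
  have hs : 0 < s := Nat.card_pos
  have hsS : s ≤ S :=
    card_stabilizer_le_of_comp_embedding (Fin.castAddEmb p) (funext (Fin.append_left i j))
  refine Nat.le_of_mul_le_mul_right ?_ hs
  calc numPerms (Fin.append i j) * s
      ≤ numPerms (Fin.append i j) * S := Nat.mul_le_mul_left _ hsS
    _ = (L + p)! := numPerms_mul_card_stabilizer _
    _ = (L + p).descFactorial p * numPerms i * s := by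
        rw [← Nat.factorial_mul_descFactorial (Nat.le_add_left p L), Nat.add_sub_cancel,
          ← numPerms_mul_card_stabilizer i]
        ring

theorem stmt_14_general (m p : ℕ) (hpm : p ≤ m)
    (i : Fin (m - p) → ℕ) (j : Fin p → ℕ) :
    numPerms (Fin.append i j) ≤ (∏ q ∈ Finset.range p, (m - q)) * numPerms i := by
  calc numPerms (Fin.append i j)
      ≤ (m - p + p).descFactorial p * numPerms i := numPerms_append_le i j
    _ = (∏ q ∈ Finset.range p, (m - q)) * numPerms i := by
      rw [Nat.sub_add_cancel hpm, Nat.descFactorial_eq_prod_range]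

/-- For nondecreasing tuples `𝐢` (of length `m−p`) and `𝐣` (of length `p`) with
entries `≥ 1`, the number of distinct rearrangements of the concatenation `(𝐢,𝐣)`
satisfies `|(𝐢,𝐣)| ≤ m(m−1)⋯(m−p+1)·|𝐢|`. -/
theorem stmt_14 (m p : ℕ) (hm : 2 ≤ m) (hp1 : 1 ≤ p) (hpm : p ≤ m)
    (i : Fin (m - p) → ℕ) (j : Fin p → ℕ)
    (hi1 : ∀ a, 1 ≤ i a) (hj1 : ∀ a, 1 ≤ j a)
    (hi : Monotone i) (hj : Monotone j) :
    numPerms (Fin.append i j) ≤ (∏ q ∈ Finset.range p, (m - q)) * numPerms i :=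
  stmt_14_general m p hpm i j
end
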